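/- arXiv:2406.15605 — 12 statements merged into one kernel-verified Lean document; each statement's English description precedes it below -/
import Mathlib

section
/- Let x, y ∈ [0,1], let ε₁, ε₂ be nonnegative real numbers, and let x*, y* be real numbers with |x* − x| ≤ ε₁ and |y* − y| ≤ ε₂. Then |(x* + y* − x*·y*) − (x + y − x·y)| ≤ ε₁ + ε₂ + x·ε₂ + y·ε₁ + ε₁·ε₂. -/
/-- Rule (R₃) of PAC-bounds propagation: the imprecision of the probabilistic-OR
combination `x + y − x·y` of two values in `[0,1]` known up to `ε₁` and `ε₂`
is bounded by `ε₁ + ε₂ + x·ε₂ + y·ε₁ + ε₁·ε₂`. -/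
theorem pac_probOr_error_bound (x y ε₁ ε₂ xs ys : ℝ)
    (hx : x ∈ Set.Icc (0 : ℝ) 1) (hy : y ∈ Set.Icc (0 : ℝ) 1)
    (hε₁ : 0 ≤ ε₁) (hε₂ : 0 ≤ ε₂)
    (h₁ : |xs - x| ≤ ε₁) (h₂ : |ys - y| ≤ ε₂) :
    |(xs + ys - xs * ys) - (x + y - x * y)| ≤ ε₁ + ε₂ + x * ε₂ + y * ε₁ + ε₁ * ε₂ := by
  obtain ⟨hx0, hx1⟩ := hx
  obtain ⟨hy0, hy1⟩ := hy
  rw [abs_le] at h₁ h₂ ⊢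
  obtain ⟨h₁l, h₁r⟩ := h₁
  obtain ⟨h₂l, h₂r⟩ := h₂
  constructor <;>
    nlinarith [mul_nonneg (by linarith : (0:ℝ) ≤ ε₁ - (xs - x)) (by linarith : (0:ℝ) ≤ ε₂ - (ys - y)),
      mul_nonneg (by linarith : (0:ℝ) ≤ ε₁ + (xs - x)) (by linarith : (0:ℝ) ≤ ε₂ + (ys - y)),
      mul_nonneg (by linarith : (0:ℝ) ≤ ε₁ - (xs - x)) (by linarith : (0:ℝ) ≤ ε₂ + (ys - y)),
      mul_nonneg (by linarith : (0:ℝ) ≤ ε₁ + (xs - x)) (by linarith : (0:ℝ) ≤ ε₂ - (ys - y)),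
      mul_nonneg hx0 hε₂, mul_nonneg hy0 hε₁, mul_nonneg hε₁ hε₂,
      mul_le_mul_of_nonneg_left h₂r hx0, mul_le_mul_of_nonneg_left h₂l hx0,
      mul_le_mul_of_nonneg_left h₁r hy0, mul_le_mul_of_nonneg_left h₁l hy0]
end

section
/- Let X and Y be independent real-valued random variables on a probability space such that X is (ε₁, δ₁)-PAC for v₁ ≥ 0 and Y is (ε₂, δ₂)-PAC for v₂ ≥ 0. Then the random variable X·Y is (v₁·ε₂ + v₂·ε₁ + ε₁·ε₂, 1 − (1 − δ₁)·(1 − δ₂))-PAC for the value v₁·v₂. -/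
open MeasureTheory ProbabilityTheory

/-- A real-valued random variable `X` is `(ε, δ)`-PAC for the true value `v` if the
probability of the event `{|X − v| ≤ ε}` is at least `1 − δ`. -/
def IsPAC {Ω : Type*} [MeasurableSpace Ω] (μ : Measure Ω) (X : Ω → ℝ)
    (v ε δ : ℝ) : Prop :=
  ENNReal.ofReal (1 - δ) ≤ μ {ω | |X ω - v| ≤ ε}

/-- PAC propagation for products of independent estimates (AND gate). -/
theorem pac_mul_indep {Ω : Type*} [MeasurableSpace Ω] (μ : Measure Ω)
    [IsProbabilityMeasure μ] (X Y : Ω → ℝ) (hX : Measurable X) (hY : Measurable Y)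
    (hXY : IndepFun X Y μ) (v₁ v₂ ε₁ ε₂ δ₁ δ₂ : ℝ)
    (hv₁ : 0 ≤ v₁) (hv₂ : 0 ≤ v₂) (hε₁ : 0 ≤ ε₁) (hε₂ : 0 ≤ ε₂)
    (hδ₁ : δ₁ ∈ Set.Icc (0 : ℝ) 1) (hδ₂ : δ₂ ∈ Set.Icc (0 : ℝ) 1)
    (h₁ : IsPAC μ X v₁ ε₁ δ₁) (h₂ : IsPAC μ Y v₂ ε₂ δ₂) :
    IsPAC μ (fun ω => X ω * Y ω) (v₁ * v₂)
      (v₁ * ε₂ + v₂ * ε₁ + ε₁ * ε₂) (1 - (1 - δ₁) * (1 - δ₂)) := by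
  unfold IsPAC at *
  have hA : MeasurableSet {x : ℝ | |x - v₁| ≤ ε₁} :=
    measurableSet_le (by measurability) measurable_const
  have hB : MeasurableSet {y : ℝ | |y - v₂| ≤ ε₂} :=
    measurableSet_le (by measurability) measurable_const
  have hsub : (X ⁻¹' {x | |x - v₁| ≤ ε₁} ∩ Y ⁻¹' {y | |y - v₂| ≤ ε₂}) ⊆
      {ω | |X ω * Y ω - v₁ * v₂| ≤ v₁ * ε₂ + v₂ * ε₁ + ε₁ * ε₂} := by
    rintro ω ⟨hx, hy⟩
    simp only [Set.mem_preimage, Set.mem_setOf_eq] at *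
    have key : X ω * Y ω - v₁ * v₂ = X ω * (Y ω - v₂) + v₂ * (X ω - v₁) := by ring
    have hxabs : |X ω| ≤ v₁ + ε₁ := by
      have := abs_sub_abs_le_abs_sub (X ω) v₁
      rw [abs_of_nonneg hv₁] at this
      linarith
    calc |X ω * Y ω - v₁ * v₂| ≤ |X ω * (Y ω - v₂)| + |v₂ * (X ω - v₁)| := by
          rw [key]; exact abs_add_le _ _
      _ = |X ω| * |Y ω - v₂| + v₂ * |X ω - v₁| := by
          rw [abs_mul, abs_mul, abs_of_nonneg hv₂]
      _ ≤ (v₁ + ε₁) * ε₂ + v₂ * ε₁ := by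
          have h0 : (0:ℝ) ≤ |Y ω - v₂| := abs_nonneg _
          nlinarith [abs_nonneg (X ω)]
      _ = v₁ * ε₂ + v₂ * ε₁ + ε₁ * ε₂ := by ring
  have hmul : μ (X ⁻¹' {x | |x - v₁| ≤ ε₁} ∩ Y ⁻¹' {y | |y - v₂| ≤ ε₂}) =
      μ (X ⁻¹' {x | |x - v₁| ≤ ε₁}) * μ (Y ⁻¹' {y | |y - v₂| ≤ ε₂}) :=
    hXY.measure_inter_preimage_eq_mul _ _ hA hB
  calc ENNReal.ofReal (1 - (1 - (1 - δ₁) * (1 - δ₂)))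
      = ENNReal.ofReal ((1 - δ₁) * (1 - δ₂)) := by ring_nf
    _ = ENNReal.ofReal (1 - δ₁) * ENNReal.ofReal (1 - δ₂) :=
        ENNReal.ofReal_mul (by linarith [hδ₁.2])
    _ ≤ μ (X ⁻¹' {x | |x - v₁| ≤ ε₁}) * μ (Y ⁻¹' {y | |y - v₂| ≤ ε₂}) := by
        exact mul_le_mul' h₁ h₂
    _ = μ (X ⁻¹' {x | |x - v₁| ≤ ε₁} ∩ Y ⁻¹' {y | |y - v₂| ≤ ε₂}) := hmul.symm
    _ ≤ _ := measure_mono hsub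
end

section
/- Let X and Y be real-valued random variables on a common probability space (not necessarily independent) such that X is (ε₁, δ₁)-PAC for v₁ ≥ 0 and Y is (ε₂, δ₂)-PAC for v₂ ≥ 0. Then the random variable X·Y is (v₁·ε₂ + v₂·ε₁ + ε₁·ε₂, δ₁ + δ₂)-PAC for the value v₁·v₂. -/
open MeasureTheory ProbabilityTheory

/-- PAC propagation for products without any independence assumption
(union bound for the uncertainty probabilities). -/
theorem pac_mul_union_bound {Ω : Type*} [MeasurableSpace Ω] (μ : Measure Ω)
    [IsProbabilityMeasure μ] (X Y : Ω → ℝ) (hX : Measurable X) (hY : Measurable Y)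
    (v₁ v₂ ε₁ ε₂ δ₁ δ₂ : ℝ)
    (hv₁ : 0 ≤ v₁) (hv₂ : 0 ≤ v₂) (hε₁ : 0 ≤ ε₁) (hε₂ : 0 ≤ ε₂)
    (hδ₁ : δ₁ ∈ Set.Icc (0 : ℝ) 1) (hδ₂ : δ₂ ∈ Set.Icc (0 : ℝ) 1)
    (h₁ : IsPAC μ X v₁ ε₁ δ₁) (h₂ : IsPAC μ Y v₂ ε₂ δ₂) :
    IsPAC μ (fun ω => X ω * Y ω) (v₁ * v₂)
      (v₁ * ε₂ + v₂ * ε₁ + ε₁ * ε₂) (δ₁ + δ₂) := by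
  set A := {ω | |X ω - v₁| ≤ ε₁} with hA
  set B := {ω | |Y ω - v₂| ≤ ε₂} with hB
  have hAm : MeasurableSet A := by
    apply measurableSet_le (by exact ((hX.sub measurable_const).abs)) measurable_const
  have hBm : MeasurableSet B := by
    apply measurableSet_le (by exact ((hY.sub measurable_const).abs)) measurable_const
  have hsub : A ∩ B ⊆ {ω | |X ω * Y ω - v₁ * v₂| ≤ v₁ * ε₂ + v₂ * ε₁ + ε₁ * ε₂} := by
    rintro ω ⟨ha, hb⟩
    simp only [hA, hB, Set.mem_setOf_eq] at ha hb ⊢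
    have hx : |X ω| ≤ v₁ + ε₁ := by
      calc |X ω| = |(X ω - v₁) + v₁| := by ring_nf
        _ ≤ |X ω - v₁| + |v₁| := abs_add_le _ _
        _ ≤ ε₁ + v₁ := add_le_add ha (le_of_eq (abs_of_nonneg hv₁))
        _ = v₁ + ε₁ := by ring
    have key : X ω * Y ω - v₁ * v₂ = X ω * (Y ω - v₂) + v₂ * (X ω - v₁) := by ring
    calc |X ω * Y ω - v₁ * v₂| ≤ |X ω| * |Y ω - v₂| + |v₂| * |X ω - v₁| := by
          rw [key]; exact (abs_add_le _ _).trans (by rw [abs_mul, abs_mul])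
      _ ≤ (v₁ + ε₁) * ε₂ + v₂ * ε₁ := by
          rw [abs_of_nonneg hv₂]
          have h1 : |X ω| * |Y ω - v₂| ≤ (v₁ + ε₁) * ε₂ :=
            mul_le_mul hx hb (abs_nonneg _) (by linarith)
          have h2 : v₂ * |X ω - v₁| ≤ v₂ * ε₁ := mul_le_mul_of_nonneg_left ha hv₂
          linarith
      _ = v₁ * ε₂ + v₂ * ε₁ + ε₁ * ε₂ := by ring
  have compl_bound : ∀ (S : Set Ω), MeasurableSet S → ∀ δ : ℝ, δ ≤ 1 →
      ENNReal.ofReal (1 - δ) ≤ μ S → μ Sᶜ ≤ ENNReal.ofReal δ := by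
    intro S hSm δ hδ hS
    rw [prob_compl_eq_one_sub hSm]
    calc 1 - μ S ≤ 1 - ENNReal.ofReal (1 - δ) := tsub_le_tsub_left hS 1
      _ = ENNReal.ofReal 1 - ENNReal.ofReal (1 - δ) := by rw [ENNReal.ofReal_one]
      _ = ENNReal.ofReal (1 - (1 - δ)) := (ENNReal.ofReal_sub _ (by linarith)).symm
      _ = ENNReal.ofReal δ := by ring_nf
  have hAc : μ Aᶜ ≤ ENNReal.ofReal δ₁ := compl_bound A hAm δ₁ hδ₁.2 h₁
  have hBc : μ Bᶜ ≤ ENNReal.ofReal δ₂ := compl_bound B hBm δ₂ hδ₂.2 h₂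
  have hIc : μ (A ∩ B)ᶜ ≤ ENNReal.ofReal (δ₁ + δ₂) := by
    rw [Set.compl_inter, ENNReal.ofReal_add hδ₁.1 hδ₂.1]
    exact (measure_union_le _ _).trans (add_le_add hAc hBc)
  have hI : ENNReal.ofReal (1 - (δ₁ + δ₂)) ≤ μ (A ∩ B) := by
    have h1 : ENNReal.ofReal (1 - (δ₁ + δ₂))
        = ENNReal.ofReal 1 - ENNReal.ofReal (δ₁ + δ₂) :=
      ENNReal.ofReal_sub _ (by linarith [hδ₁.1, hδ₂.1])
    rw [h1, ENNReal.ofReal_one]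
    calc (1 : ENNReal) - ENNReal.ofReal (δ₁ + δ₂) ≤ 1 - μ (A ∩ B)ᶜ :=
          tsub_le_tsub_left hIc 1
      _ ≤ μ (A ∩ B) := by
          rw [tsub_le_iff_right, measure_add_measure_compl (hAm.inter hBm), measure_univ]
  exact hI.trans (measure_mono hsub)
end

section
/- Let X and Y be independent real-valued random variables on a probability space such that X is (ε₁, δ₁)-PAC for v₁ ∈ [0,1] and Y is (ε₂, δ₂)-PAC for v₂ ∈ [0,1]. Then the random variable X + Y − X·Y is (ε₁ + ε₂ + v₁·ε₂ + v₂·ε₁ + ε₁·ε₂, 1 − (1 − δ₁)·(1 − δ₂))-PAC for the value v₁ + v₂ − v₁·v₂. -/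
open MeasureTheory ProbabilityTheory

/-- PAC propagation for the probabilistic-OR combination `x + y − x·y` of
independent estimates (OR gate). -/
theorem pac_probOr_indep {Ω : Type*} [MeasurableSpace Ω] (μ : Measure Ω)
    [IsProbabilityMeasure μ] (X Y : Ω → ℝ) (hX : Measurable X) (hY : Measurable Y)
    (hXY : IndepFun X Y μ) (v₁ v₂ ε₁ ε₂ δ₁ δ₂ : ℝ)
    (hv₁ : v₁ ∈ Set.Icc (0 : ℝ) 1) (hv₂ : v₂ ∈ Set.Icc (0 : ℝ) 1)
    (hε₁ : 0 ≤ ε₁) (hε₂ : 0 ≤ ε₂)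
    (hδ₁ : δ₁ ∈ Set.Icc (0 : ℝ) 1) (hδ₂ : δ₂ ∈ Set.Icc (0 : ℝ) 1)
    (h₁ : IsPAC μ X v₁ ε₁ δ₁) (h₂ : IsPAC μ Y v₂ ε₂ δ₂) :
    IsPAC μ (fun ω => X ω + Y ω - X ω * Y ω) (v₁ + v₂ - v₁ * v₂)
      (ε₁ + ε₂ + v₁ * ε₂ + v₂ * ε₁ + ε₁ * ε₂) (1 - (1 - δ₁) * (1 - δ₂)) := by
  obtain ⟨hv₁0, hv₁1⟩ := hv₁
  obtain ⟨hv₂0, hv₂1⟩ := hv₂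
  have hs : MeasurableSet {x : ℝ | |x - v₁| ≤ ε₁} :=
    measurableSet_le (by measurability) measurable_const
  have ht : MeasurableSet {x : ℝ | |x - v₂| ≤ ε₂} :=
    measurableSet_le (by measurability) measurable_const
  have hmul := hXY.measure_inter_preimage_eq_mul _ _ hs ht
  have hsub : X ⁻¹' {x : ℝ | |x - v₁| ≤ ε₁} ∩ Y ⁻¹' {x : ℝ | |x - v₂| ≤ ε₂} ⊆
      {ω | |(X ω + Y ω - X ω * Y ω) - (v₁ + v₂ - v₁ * v₂)| ≤
        ε₁ + ε₂ + v₁ * ε₂ + v₂ * ε₁ + ε₁ * ε₂} := by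
    rintro ω ⟨h1, h2⟩
    simp only [Set.mem_preimage, Set.mem_setOf_eq] at h1 h2 ⊢
    have key : (X ω + Y ω - X ω * Y ω) - (v₁ + v₂ - v₁ * v₂) =
        (X ω - v₁) + (Y ω - v₂) - (X ω - v₁) * (Y ω - v₂)
          - v₁ * (Y ω - v₂) - v₂ * (X ω - v₁) := by ring
    rw [key]
    calc |(X ω - v₁) + (Y ω - v₂) - (X ω - v₁) * (Y ω - v₂)
          - v₁ * (Y ω - v₂) - v₂ * (X ω - v₁)|
        ≤ |X ω - v₁| + |Y ω - v₂| + |X ω - v₁| * |Y ω - v₂|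
          + v₁ * |Y ω - v₂| + v₂ * |X ω - v₁| := by
          have := abs_nonneg (X ω - v₁)
          have := abs_nonneg (Y ω - v₂)
          calc _ ≤ |(X ω - v₁) + (Y ω - v₂) - (X ω - v₁) * (Y ω - v₂)
                - v₁ * (Y ω - v₂)| + |v₂ * (X ω - v₁)| := abs_sub _ _
            _ ≤ |(X ω - v₁) + (Y ω - v₂) - (X ω - v₁) * (Y ω - v₂)|
                + |v₁ * (Y ω - v₂)| + |v₂ * (X ω - v₁)| := by
                gcongr; exact abs_sub _ _
            _ ≤ |(X ω - v₁) + (Y ω - v₂)| + |(X ω - v₁) * (Y ω - v₂)|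
                + |v₁ * (Y ω - v₂)| + |v₂ * (X ω - v₁)| := by
                gcongr; exact abs_sub _ _
            _ ≤ |X ω - v₁| + |Y ω - v₂| + |X ω - v₁| * |Y ω - v₂|
                + v₁ * |Y ω - v₂| + v₂ * |X ω - v₁| := by
                simp only [abs_mul, abs_of_nonneg hv₁0, abs_of_nonneg hv₂0]
                gcongr
                exact abs_add_le _ _
      _ ≤ ε₁ + ε₂ + ε₁ * ε₂ + v₁ * ε₂ + v₂ * ε₁ := by gcongr
      _ = ε₁ + ε₂ + v₁ * ε₂ + v₂ * ε₁ + ε₁ * ε₂ := by ring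
  have hle : ENNReal.ofReal ((1 - δ₁) * (1 - δ₂)) ≤
      μ {ω | |(X ω + Y ω - X ω * Y ω) - (v₁ + v₂ - v₁ * v₂)| ≤
        ε₁ + ε₂ + v₁ * ε₂ + v₂ * ε₁ + ε₁ * ε₂} := by
    refine le_trans ?_ (le_trans (le_of_eq hmul.symm) (measure_mono hsub))
    rw [ENNReal.ofReal_mul (by linarith [hδ₁.2])]
    exact mul_le_mul' h₁ h₂
  unfold IsPAC
  calc ENNReal.ofReal (1 - (1 - (1 - δ₁) * (1 - δ₂)))
      = ENNReal.ofReal ((1 - δ₁) * (1 - δ₂)) := by ring_nf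
    _ ≤ _ := hle
end

section
/- Let X and Y be real-valued random variables on a common probability space (not necessarily independent) such that X is (ε₁, δ₁)-PAC for v₁ ∈ [0,1] and Y is (ε₂, δ₂)-PAC for v₂ ∈ [0,1]. Then the random variable X + Y − X·Y is (ε₁ + ε₂ + v₁·ε₂ + v₂·ε₁ + ε₁·ε₂, δ₁ + δ₂)-PAC for the value v₁ + v₂ − v₁·v₂. -/
open MeasureTheory ProbabilityTheory

/-- PAC propagation for the combination `x + y − x·y` without any independence
assumption (union bound for the uncertainty probabilities). -/
theorem pac_probOr_union_bound {Ω : Type*} [MeasurableSpace Ω] (μ : Measure Ω)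
    [IsProbabilityMeasure μ] (X Y : Ω → ℝ) (hX : Measurable X) (hY : Measurable Y)
    (v₁ v₂ ε₁ ε₂ δ₁ δ₂ : ℝ)
    (hv₁ : v₁ ∈ Set.Icc (0 : ℝ) 1) (hv₂ : v₂ ∈ Set.Icc (0 : ℝ) 1)
    (hε₁ : 0 ≤ ε₁) (hε₂ : 0 ≤ ε₂)
    (hδ₁ : δ₁ ∈ Set.Icc (0 : ℝ) 1) (hδ₂ : δ₂ ∈ Set.Icc (0 : ℝ) 1)
    (h₁ : IsPAC μ X v₁ ε₁ δ₁) (h₂ : IsPAC μ Y v₂ ε₂ δ₂) :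
    IsPAC μ (fun ω => X ω + Y ω - X ω * Y ω) (v₁ + v₂ - v₁ * v₂)
      (ε₁ + ε₂ + v₁ * ε₂ + v₂ * ε₁ + ε₁ * ε₂) (δ₁ + δ₂) := by
  obtain ⟨hv₁0, hv₁1⟩ := hv₁
  obtain ⟨hv₂0, hv₂1⟩ := hv₂
  obtain ⟨hδ₁0, hδ₁1⟩ := hδ₁
  obtain ⟨hδ₂0, hδ₂1⟩ := hδ₂
  set A : Set Ω := {ω | |X ω - v₁| ≤ ε₁} with hAdef
  set B : Set Ω := {ω | |Y ω - v₂| ≤ ε₂} with hBdef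
  have hA : MeasurableSet A := by
    apply measurableSet_le (by measurability) measurable_const
  have hB : MeasurableSet B := by
    apply measurableSet_le (by measurability) measurable_const
  have hsub : A ∩ B ⊆ {ω | |X ω + Y ω - X ω * Y ω - (v₁ + v₂ - v₁ * v₂)| ≤
      ε₁ + ε₂ + v₁ * ε₂ + v₂ * ε₁ + ε₁ * ε₂} := by
    rintro ω ⟨ha, hb⟩
    simp only [hAdef, hBdef, Set.mem_setOf_eq, abs_le] at ha hb ⊢
    obtain ⟨ha1, ha2⟩ := ha
    obtain ⟨hb1, hb2⟩ := hb
    constructor <;> nlinarith [mul_nonneg hε₁ hε₂, mul_nonneg hv₁0 hε₂,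
      mul_nonneg hv₂0 hε₁, sq_nonneg (X ω - v₁ + (Y ω - v₂)),
      sq_nonneg (X ω - v₁ - (Y ω - v₂))]
  have hAc : μ Aᶜ ≤ ENNReal.ofReal δ₁ := by
    rw [prob_compl_eq_one_sub hA]
    refine tsub_le_iff_right.mpr ?_
    calc (1 : ENNReal) = ENNReal.ofReal (δ₁ + (1 - δ₁)) := by norm_num
    _ = ENNReal.ofReal δ₁ + ENNReal.ofReal (1 - δ₁) := by
        rw [ENNReal.ofReal_add hδ₁0 (by linarith)]
    _ ≤ ENNReal.ofReal δ₁ + μ A := by gcongr; exact h₁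
  have hBc : μ Bᶜ ≤ ENNReal.ofReal δ₂ := by
    rw [prob_compl_eq_one_sub hB]
    refine tsub_le_iff_right.mpr ?_
    calc (1 : ENNReal) = ENNReal.ofReal (δ₂ + (1 - δ₂)) := by norm_num
    _ = ENNReal.ofReal δ₂ + ENNReal.ofReal (1 - δ₂) := by
        rw [ENNReal.ofReal_add hδ₂0 (by linarith)]
    _ ≤ ENNReal.ofReal δ₂ + μ B := by gcongr; exact h₂
  have hAB : ENNReal.ofReal (1 - (δ₁ + δ₂)) ≤ μ (A ∩ B) := by
    have h1 : μ (A ∩ B) = 1 - μ (Aᶜ ∪ Bᶜ) := by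
      rw [← Set.compl_inter, prob_compl_eq_one_sub (hA.inter hB),
        ENNReal.sub_sub_cancel ENNReal.one_ne_top prob_le_one]
    rw [h1]
    have h2 : μ (Aᶜ ∪ Bᶜ) ≤ ENNReal.ofReal δ₁ + ENNReal.ofReal δ₂ :=
      le_trans (measure_union_le _ _) (add_le_add hAc hBc)
    calc ENNReal.ofReal (1 - (δ₁ + δ₂))
        = ENNReal.ofReal 1 - ENNReal.ofReal (δ₁ + δ₂) := by
          rw [ENNReal.ofReal_sub _ (by linarith)]
    _ = 1 - (ENNReal.ofReal δ₁ + ENNReal.ofReal δ₂) := by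
          rw [ENNReal.ofReal_add hδ₁0 hδ₂0, ENNReal.ofReal_one]
    _ ≤ 1 - μ (Aᶜ ∪ Bᶜ) := by gcongr
  exact hAB.trans (measure_mono hsub)
end

section
/- Let X and Y be independent real-valued random variables on a probability space such that X is (ε₁, δ₁)-PAC for v₁ ∈ ℝ and Y is (ε₂, δ₂)-PAC for v₂ ∈ ℝ. Then the random variable max(X, Y) is (max(ε₁, ε₂), 1 − (1 − δ₁)·(1 − δ₂))-PAC for the value max(v₁, v₂). -/
open MeasureTheory ProbabilityTheory

/-- PAC propagation for the maximum of independent estimates. -/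
theorem pac_max_indep {Ω : Type*} [MeasurableSpace Ω] (μ : Measure Ω)
    [IsProbabilityMeasure μ] (X Y : Ω → ℝ) (hX : Measurable X) (hY : Measurable Y)
    (hXY : IndepFun X Y μ) (v₁ v₂ ε₁ ε₂ δ₁ δ₂ : ℝ)
    (hε₁ : 0 ≤ ε₁) (hε₂ : 0 ≤ ε₂)
    (hδ₁ : δ₁ ∈ Set.Icc (0 : ℝ) 1) (hδ₂ : δ₂ ∈ Set.Icc (0 : ℝ) 1)
    (h₁ : IsPAC μ X v₁ ε₁ δ₁) (h₂ : IsPAC μ Y v₂ ε₂ δ₂) :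
    IsPAC μ (fun ω => max (X ω) (Y ω)) (max v₁ v₂)
      (max ε₁ ε₂) (1 - (1 - δ₁) * (1 - δ₂)) := by
  unfold IsPAC at *
  have hsub : X ⁻¹' {x | |x - v₁| ≤ ε₁} ∩ Y ⁻¹' {x | |x - v₂| ≤ ε₂} ⊆
      {ω | |max (X ω) (Y ω) - max v₁ v₂| ≤ max ε₁ ε₂} := by
    rintro ω ⟨hx, hy⟩
    simp only [Set.mem_preimage, Set.mem_setOf_eq] at hx hy ⊢
    exact le_trans (abs_max_sub_max_le_max (X ω) (Y ω) v₁ v₂) (max_le_max hx hy)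
  have hind := hXY.measure_inter_preimage_eq_mul
    {x | |x - v₁| ≤ ε₁} {x | |x - v₂| ≤ ε₂}
    (show MeasurableSet {x : ℝ | |x - v₁| ≤ ε₁} from
      measurableSet_le (by fun_prop) measurable_const)
    (show MeasurableSet {x : ℝ | |x - v₂| ≤ ε₂} from
      measurableSet_le (by fun_prop) measurable_const)
  calc ENNReal.ofReal (1 - (1 - (1 - δ₁) * (1 - δ₂)))
      = ENNReal.ofReal ((1 - δ₁) * (1 - δ₂)) := by ring_nf
    _ = ENNReal.ofReal (1 - δ₁) * ENNReal.ofReal (1 - δ₂) :=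
        ENNReal.ofReal_mul (by linarith [hδ₁.2])
    _ ≤ μ (X ⁻¹' {x | |x - v₁| ≤ ε₁}) * μ (Y ⁻¹' {x | |x - v₂| ≤ ε₂}) :=
        mul_le_mul' h₁ h₂
    _ = μ (X ⁻¹' {x | |x - v₁| ≤ ε₁} ∩ Y ⁻¹' {x | |x - v₂| ≤ ε₂}) := hind.symm
    _ ≤ _ := measure_mono hsub
end

section
/- Let X and Y be independent real-valued random variables on a probability space such that X is (ε₁, δ₁)-PAC for v₁ ∈ ℝ and Y is (ε₂, δ₂)-PAC for v₂ ∈ ℝ. Then the random variable min(X, Y) is (max(ε₁, ε₂), 1 − (1 − δ₁)·(1 − δ₂))-PAC for the value min(v₁, v₂). -/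
open MeasureTheory ProbabilityTheory

/-- PAC propagation for the minimum of independent estimates. -/
theorem pac_min_indep {Ω : Type*} [MeasurableSpace Ω] (μ : Measure Ω)
    [IsProbabilityMeasure μ] (X Y : Ω → ℝ) (hX : Measurable X) (hY : Measurable Y)
    (hXY : IndepFun X Y μ) (v₁ v₂ ε₁ ε₂ δ₁ δ₂ : ℝ)
    (hε₁ : 0 ≤ ε₁) (hε₂ : 0 ≤ ε₂)
    (hδ₁ : δ₁ ∈ Set.Icc (0 : ℝ) 1) (hδ₂ : δ₂ ∈ Set.Icc (0 : ℝ) 1)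
    (h₁ : IsPAC μ X v₁ ε₁ δ₁) (h₂ : IsPAC μ Y v₂ ε₂ δ₂) :
    IsPAC μ (fun ω => min (X ω) (Y ω)) (min v₁ v₂)
      (max ε₁ ε₂) (1 - (1 - δ₁) * (1 - δ₂)) := by
  unfold IsPAC at *
  have hs : MeasurableSet {x : ℝ | |x - v₁| ≤ ε₁} :=
    measurableSet_le (by fun_prop) measurable_const
  have ht : MeasurableSet {x : ℝ | |x - v₂| ≤ ε₂} :=
    measurableSet_le (by fun_prop) measurable_const
  have hmul : μ (X ⁻¹' {x | |x - v₁| ≤ ε₁} ∩ Y ⁻¹' {x | |x - v₂| ≤ ε₂})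
      = μ (X ⁻¹' {x | |x - v₁| ≤ ε₁}) * μ (Y ⁻¹' {x | |x - v₂| ≤ ε₂}) :=
    hXY.measure_inter_preimage_eq_mul _ _ hs ht
  have hsub : X ⁻¹' {x | |x - v₁| ≤ ε₁} ∩ Y ⁻¹' {x | |x - v₂| ≤ ε₂}
      ⊆ {ω | |min (X ω) (Y ω) - min v₁ v₂| ≤ max ε₁ ε₂} := by
    rintro ω ⟨hx, hy⟩
    simp only [Set.mem_preimage, Set.mem_setOf_eq] at hx hy
    exact (abs_min_sub_min_le_max (X ω) (Y ω) v₁ v₂).trans (max_le_max hx hy)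
  calc ENNReal.ofReal (1 - (1 - (1 - δ₁) * (1 - δ₂)))
      = ENNReal.ofReal ((1 - δ₁) * (1 - δ₂)) := by ring_nf
    _ = ENNReal.ofReal (1 - δ₁) * ENNReal.ofReal (1 - δ₂) :=
        ENNReal.ofReal_mul (by linarith [hδ₁.2])
    _ ≤ μ (X ⁻¹' {x | |x - v₁| ≤ ε₁}) * μ (Y ⁻¹' {x | |x - v₂| ≤ ε₂}) :=
        mul_le_mul' h₁ h₂
    _ = μ (X ⁻¹' {x | |x - v₁| ≤ ε₁} ∩ Y ⁻¹' {x | |x - v₂| ≤ ε₂}) := hmul.symm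
    _ ≤ _ := measure_mono hsub
end

section
/- Let X and Y be independent real-valued random variables on a probability space such that X is (ε₁, δ₁)-PAC for v₁ ∈ ℝ and Y is (ε₂, δ₂)-PAC for v₂ ∈ ℝ. Then the random variable X + Y is (ε₁ + ε₂, 1 − (1 − δ₁)·(1 − δ₂))-PAC for the value v₁ + v₂. -/
open MeasureTheory ProbabilityTheory

/-- PAC propagation for the sum of independent estimates. -/
theorem pac_add_indep {Ω : Type*} [MeasurableSpace Ω] (μ : Measure Ω)
    [IsProbabilityMeasure μ] (X Y : Ω → ℝ) (hX : Measurable X) (hY : Measurable Y)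
    (hXY : IndepFun X Y μ) (v₁ v₂ ε₁ ε₂ δ₁ δ₂ : ℝ)
    (hε₁ : 0 ≤ ε₁) (hε₂ : 0 ≤ ε₂)
    (hδ₁ : δ₁ ∈ Set.Icc (0 : ℝ) 1) (hδ₂ : δ₂ ∈ Set.Icc (0 : ℝ) 1)
    (h₁ : IsPAC μ X v₁ ε₁ δ₁) (h₂ : IsPAC μ Y v₂ ε₂ δ₂) :
    IsPAC μ (fun ω => X ω + Y ω) (v₁ + v₂)
      (ε₁ + ε₂) (1 - (1 - δ₁) * (1 - δ₂)) := by
  unfold IsPAC at *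
  set s : Set ℝ := {t | |t - v₁| ≤ ε₁} with hs
  set t : Set ℝ := {u | |u - v₂| ≤ ε₂} with ht
  have hsm : MeasurableSet s := by
    have : s = Metric.closedBall v₁ ε₁ := by
      ext x; simp [hs, Real.dist_eq, Metric.mem_closedBall]
    rw [this]; exact measurableSet_closedBall
  have htm : MeasurableSet t := by
    have : t = Metric.closedBall v₂ ε₂ := by
      ext x; simp [ht, Real.dist_eq, Metric.mem_closedBall]
    rw [this]; exact measurableSet_closedBall
  have hsub : X ⁻¹' s ∩ Y ⁻¹' t ⊆ {ω | |X ω + Y ω - (v₁ + v₂)| ≤ ε₁ + ε₂} := by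
    rintro ω ⟨h1, h2⟩
    have : X ω + Y ω - (v₁ + v₂) = (X ω - v₁) + (Y ω - v₂) := by ring
    simp only [Set.mem_setOf_eq, this]
    exact (abs_add_le _ _).trans (add_le_add h1 h2)
  have hmul := hXY.measure_inter_preimage_eq_mul s t hsm htm
  calc ENNReal.ofReal (1 - (1 - (1 - δ₁) * (1 - δ₂)))
      = ENNReal.ofReal ((1 - δ₁) * (1 - δ₂)) := by ring_nf
    _ = ENNReal.ofReal (1 - δ₁) * ENNReal.ofReal (1 - δ₂) := by
        rw [ENNReal.ofReal_mul (by linarith [hδ₁.2])]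
    _ ≤ μ (X ⁻¹' s) * μ (Y ⁻¹' t) := by
        exact mul_le_mul' h₁ h₂
    _ = μ (X ⁻¹' s ∩ Y ⁻¹' t) := hmul.symm
    _ ≤ _ := measure_mono hsub
end

section
/- Let t be an attack–defense tree term over B in which each basic event occurs at most once, and let V_P(t) = (X₁, X₂) be its powerset semantics. Then X₁ is exactly the set of satisfying assignments of t, i.e., X₁ = { S ⊆ B(t) : eval_S(t) = tt }. -/
/-- Attack–defense tree terms over a type `B` of basic events. -/
inductive ADT (B : Type*) where
  | leaf : B → ADT B
  | and : ADT B → ADT B → ADT B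
  | or : ADT B → ADT B → ADT B
  | not : ADT B → ADT B

namespace ADT

variable {B : Type*} [DecidableEq B]

/-- The finite set `B(t)` of basic events occurring in a term. -/
def events : ADT B → Finset B
  | .leaf b => {b}
  | .and t₁ t₂ => events t₁ ∪ events t₂
  | .or t₁ t₂ => events t₁ ∪ events t₂
  | .not t => events t

/-- Linearity: each basic event occurs at most once in the term. -/
def Linear : ADT B → Prop
  | .leaf _ => True
  | .and t₁ t₂ => Linear t₁ ∧ Linear t₂ ∧ Disjoint (events t₁) (events t₂)
  | .or t₁ t₂ => Linear t₁ ∧ Linear t₂ ∧ Disjoint (events t₁) (events t₂)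
  | .not t => Linear t

/-- Boolean semantics `eval_S(t)` for an assignment `S ⊆ B` (the set of basic
events set to true). -/
def eval (S : Finset B) : ADT B → Bool
  | .leaf b => decide (b ∈ S)
  | .and t₁ t₂ => eval S t₁ && eval S t₂
  | .or t₁ t₂ => eval S t₁ || eval S t₂
  | .not t => !eval S t


/-- The powerset bottom-up traversal semantics `V_P(t) = (X₁, X₂)`:
the first component collects (what are claimed to be) the satisfying
assignments, the second the unsatisfying ones. -/
def VP : ADT B → Finset (Finset B) × Finset (Finset B)
  | .leaf b => ({{b}}, {∅})
  | .and t₁ t₂ =>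
      (Finset.image₂ (· ∪ ·) (VP t₁).1 (VP t₂).1,
        Finset.image₂ (· ∪ ·) (VP t₁).2 (VP t₂).1 ∪
          Finset.image₂ (· ∪ ·) (VP t₁).2 (VP t₂).2 ∪
          Finset.image₂ (· ∪ ·) (VP t₁).1 (VP t₂).2)
  | .or t₁ t₂ =>
      (Finset.image₂ (· ∪ ·) (VP t₁).1 (VP t₂).1 ∪
          Finset.image₂ (· ∪ ·) (VP t₁).1 (VP t₂).2 ∪
          Finset.image₂ (· ∪ ·) (VP t₁).2 (VP t₂).1,
        Finset.image₂ (· ∪ ·) (VP t₁).2 (VP t₂).2)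
  | .not t => ((VP t).2, (VP t).1)

lemma eval_congr (S S' : Finset B) (t : ADT B) (h : S ∩ t.events = S' ∩ t.events) :
    eval S t = eval S' t := by
  induction t with
  | leaf b =>
    have hb : b ∈ S ↔ b ∈ S' := by
      constructor <;> intro hb
      · have h1 : b ∈ S ∩ events (leaf b) := by simp [events, hb]
        rw [h] at h1; exact (Finset.mem_inter.mp h1).1
      · have h1 : b ∈ S' ∩ events (leaf b) := by simp [events, hb]
        rw [← h] at h1; exact (Finset.mem_inter.mp h1).1
    simp [eval, hb]
  | and t₁ t₂ ih₁ ih₂ =>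
    have h₁ : S ∩ t₁.events = S' ∩ t₁.events := by
      have : t₁.events = events (and t₁ t₂) ∩ t₁.events := by
        simp [events, Finset.union_inter_cancel_left]
      rw [this, ← Finset.inter_assoc, ← Finset.inter_assoc, h]
    have h₂ : S ∩ t₂.events = S' ∩ t₂.events := by
      have : t₂.events = events (and t₁ t₂) ∩ t₂.events := by
        simp [events, Finset.union_inter_cancel_right]
      rw [this, ← Finset.inter_assoc, ← Finset.inter_assoc, h]
    simp [eval, ih₁ h₁, ih₂ h₂]
  | or t₁ t₂ ih₁ ih₂ =>
    have h₁ : S ∩ t₁.events = S' ∩ t₁.events := by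
      have : t₁.events = events (or t₁ t₂) ∩ t₁.events := by
        simp [events, Finset.union_inter_cancel_left]
      rw [this, ← Finset.inter_assoc, ← Finset.inter_assoc, h]
    have h₂ : S ∩ t₂.events = S' ∩ t₂.events := by
      have : t₂.events = events (or t₁ t₂) ∩ t₂.events := by
        simp [events, Finset.union_inter_cancel_right]
      rw [this, ← Finset.inter_assoc, ← Finset.inter_assoc, h]
    simp [eval, ih₁ h₁, ih₂ h₂]
  | not t ih =>
    have h' : S ∩ t.events = S' ∩ t.events := h
    simp [eval, ih h']

lemma key (t₁ t₂ : ADT B) (hd : Disjoint t₁.events t₂.events) (b₁ b₂ : Bool) :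
    Finset.image₂ (· ∪ ·)
      (t₁.events.powerset.filter (fun S => eval S t₁ = b₁))
      (t₂.events.powerset.filter (fun S => eval S t₂ = b₂))
    = (t₁.events ∪ t₂.events).powerset.filter
        (fun S => eval S t₁ = b₁ ∧ eval S t₂ = b₂) := by
  ext S
  simp only [Finset.mem_image₂, Finset.mem_filter, Finset.mem_powerset]
  constructor
  · rintro ⟨a, ⟨ha, ea⟩, b, ⟨hb, eb⟩, rfl⟩
    refine ⟨Finset.union_subset_union ha hb, ?_, ?_⟩
    · rw [← ea]; apply eval_congr
      have hbe : b ∩ t₁.events = ∅ :=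
        Finset.disjoint_iff_inter_eq_empty.mp ((hd.symm.mono_left hb))
      rw [Finset.union_inter_distrib_right, hbe, Finset.union_empty]
    · rw [← eb]; apply eval_congr
      have hae : a ∩ t₂.events = ∅ :=
        Finset.disjoint_iff_inter_eq_empty.mp (hd.mono_left ha)
      rw [Finset.union_inter_distrib_right, hae, Finset.empty_union]
  · rintro ⟨hS, e₁, e₂⟩
    refine ⟨S ∩ t₁.events, ⟨Finset.inter_subset_right, ?_⟩,
            S ∩ t₂.events, ⟨Finset.inter_subset_right, ?_⟩, ?_⟩
    · rw [← e₁]; apply eval_congr; rw [Finset.inter_assoc, Finset.inter_self]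
    · rw [← e₂]; apply eval_congr; rw [Finset.inter_assoc, Finset.inter_self]
    · rw [← Finset.inter_union_distrib_left, Finset.inter_eq_left.mpr hS]

theorem VP_spec (t : ADT B) (hlin : t.Linear) :
    (VP t).1 = t.events.powerset.filter (fun S => t.eval S = true) ∧
    (VP t).2 = t.events.powerset.filter (fun S => t.eval S = false) := by
  induction t with
  | leaf b =>
    constructor <;> ext S <;>
      simp [VP, events, eval, Finset.subset_singleton_iff] <;> aesop
  | and t₁ t₂ ih₁ ih₂ =>
    obtain ⟨l₁, l₂, hd⟩ := hlin
    obtain ⟨p₁, q₁⟩ := ih₁ l₁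
    obtain ⟨p₂, q₂⟩ := ih₂ l₂
    constructor
    · show Finset.image₂ _ _ _ = _
      rw [p₁, p₂, key t₁ t₂ hd true true]
      apply Finset.filter_congr
      intro S _
      simp [eval]
    · show _ ∪ _ ∪ _ = _
      rw [p₁, p₂, q₁, q₂, key t₁ t₂ hd false true, key t₁ t₂ hd false false,
        key t₁ t₂ hd true false, ← Finset.filter_or, ← Finset.filter_or]
      apply Finset.filter_congr
      intro S _
      simp only [eval, Bool.and_eq_false_iff]
      constructor
      · rintro ((⟨h1, h2⟩ | ⟨h1, h2⟩) | ⟨h1, h2⟩) <;> simp [h1, h2]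
      · intro h
        rcases Bool.eq_false_or_eq_true (eval S t₁) with h1 | h1 <;>
          rcases Bool.eq_false_or_eq_true (eval S t₂) with h2 | h2 <;>
          simp_all
  | or t₁ t₂ ih₁ ih₂ =>
    obtain ⟨l₁, l₂, hd⟩ := hlin
    obtain ⟨p₁, q₁⟩ := ih₁ l₁
    obtain ⟨p₂, q₂⟩ := ih₂ l₂
    constructor
    · show _ ∪ _ ∪ _ = _
      rw [p₁, p₂, q₁, q₂, key t₁ t₂ hd true true, key t₁ t₂ hd true false,
        key t₁ t₂ hd false true, ← Finset.filter_or, ← Finset.filter_or]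
      apply Finset.filter_congr
      intro S _
      simp only [eval, Bool.or_eq_true]
      constructor
      · rintro ((⟨h1, h2⟩ | ⟨h1, h2⟩) | ⟨h1, h2⟩) <;> simp [h1, h2]
      · intro h
        rcases Bool.eq_false_or_eq_true (eval S t₁) with h1 | h1 <;>
          rcases Bool.eq_false_or_eq_true (eval S t₂) with h2 | h2 <;>
          simp_all
    · show Finset.image₂ _ _ _ = _
      rw [q₁, q₂, key t₁ t₂ hd false false]
      apply Finset.filter_congr
      intro S _
      simp [eval]
  | not t ih =>
    obtain ⟨p, q⟩ := ih hlin
    constructor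
    · show (VP t).2 = _
      rw [q]; apply Finset.filter_congr; intro S _; simp [eval, events]
    · show (VP t).1 = _
      rw [p]; apply Finset.filter_congr; intro S _; simp [eval, events]

/-- for a linear term, the first component of the powerset
semantics is exactly the set of satisfying assignments
`{ S ⊆ B(t) : eval_S(t) = tt }`. -/
theorem VP_fst_eq_satisfying (t : ADT B) (hlin : t.Linear) :
    (VP t).1 = t.events.powerset.filter (fun S => t.eval S = true) :=
  (VP_spec t hlin).1

end ADT
end

section
/- Let t be an attack–defense tree term over B in which each basic event occurs at most once, let p : B → [0,1], and let X₂ be the set of unsatisfying assignments of t, i.e., X₂ = { S ⊆ B(t) : eval_S(t) = ff }. Then the probabilistic bottom-up semantics satisfies V_p(t) = 1 − Σ_{S ∈ X₂} ( Π_{b ∈ S} p(b) · Π_{b ∈ B(t) \ S} (1 − p(b)) ). -/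
namespace ADT

variable {B : Type*} [DecidableEq B]

/-- The probabilistic bottom-up traversal semantics `V_p(t)`. -/
def Vp (p : B → ℝ) : ADT B → ℝ
  | .leaf b => p b
  | .and t₁ t₂ => Vp p t₁ * Vp p t₂
  | .or t₁ t₂ => Vp p t₁ + Vp p t₂ - Vp p t₁ * Vp p t₂
  | .not t => 1 - Vp p t

def weight (p : B → ℝ) (A S : Finset B) : ℝ := (∏ b ∈ S, p b) * ∏ b ∈ A \ S, (1 - p b)

def probOf (p : B → ℝ) (A : Finset B) (Q : Finset B → Bool) : ℝ :=
  ∑ S ∈ A.powerset.filter (fun S => Q S), weight p A S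

theorem sum_weight_powerset (p : B → ℝ) (A : Finset B) : ∑ S ∈ A.powerset, weight p A S = 1 := by
  simp [weight, ← Finset.prod_add]

theorem probOf_not (p : B → ℝ) (A : Finset B) (Q : Finset B → Bool) :
    probOf p A (fun S => !Q S) = 1 - probOf p A Q := by
  rw [eq_sub_iff_add_eq, ← sum_weight_powerset p A,
    ← Finset.sum_filter_not_add_sum_filter A.powerset (fun S => Q S)]
  simp only [probOf, Bool.not_eq_true', Bool.not_eq_true]

theorem probOf_singleton_mem (p : B → ℝ) (b : B) :
    probOf p {b} (fun S => decide (b ∈ S)) = p b := by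
  have : ({b} : Finset B).powerset.filter (fun S => decide (b ∈ S)) = {{b}} := by
    grind [Finset.subset_singleton_iff]
  rw [probOf, this, Finset.sum_singleton, weight, Finset.sdiff_self]
  simp

theorem weight_union {p : B → ℝ} {A₁ A₂ S₁ S₂ : Finset B} (hd : Disjoint A₁ A₂)
    (h₁ : S₁ ⊆ A₁) (h₂ : S₂ ⊆ A₂) :
    weight p (A₁ ∪ A₂) (S₁ ∪ S₂) = weight p A₁ S₁ * weight p A₂ S₂ := by
  have hS : Disjoint S₁ S₂ := hd.mono h₁ h₂
  have hA : Disjoint (A₁ \ S₁) (A₂ \ S₂) := hd.mono Finset.sdiff_subset Finset.sdiff_subset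
  have hsdiff : (A₁ ∪ A₂) \ (S₁ ∪ S₂) = A₁ \ S₁ ∪ A₂ \ S₂ := by
    grind [Finset.disjoint_left]
  rw [weight, hsdiff, Finset.prod_union hS, Finset.prod_union hA, weight, weight]
  ring

theorem sum_powerset_union {M : Type*} [AddCommMonoid M] {A₁ A₂ : Finset B}
    (hd : Disjoint A₁ A₂) (f : Finset B → M) :
    ∑ S ∈ (A₁ ∪ A₂).powerset, f S = ∑ S₁ ∈ A₁.powerset, ∑ S₂ ∈ A₂.powerset, f (S₁ ∪ S₂) := by
  induction A₂ using Finset.induction_on generalizing f with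
  | empty => simp
  | insert a A₂ ha ih =>
    have hd' := Finset.disjoint_insert_right.mp hd
    rw [Finset.union_insert, Finset.sum_powerset_insert (by simp [ha, hd'.1]),
      ih hd'.2, ih hd'.2]
    simp only [Finset.sum_powerset_insert ha, Finset.union_insert, Finset.sum_add_distrib]

theorem probOf_and {p : B → ℝ} {A₁ A₂ : Finset B} (hd : Disjoint A₁ A₂)
    {Q₁ Q₂ : Finset B → Bool} (hQ₁ : ∀ S, Q₁ (S ∩ A₁) = Q₁ S) (hQ₂ : ∀ S, Q₂ (S ∩ A₂) = Q₂ S) :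
    probOf p (A₁ ∪ A₂) (fun S => Q₁ S && Q₂ S) = probOf p A₁ Q₁ * probOf p A₂ Q₂ := by
  simp only [probOf, Finset.sum_filter, Finset.sum_mul_sum, sum_powerset_union hd]
  refine Finset.sum_congr rfl fun S₁ h₁ => Finset.sum_congr rfl fun S₂ h₂ => ?_
  rw [Finset.mem_powerset] at h₁ h₂
  have e₁ : (S₁ ∪ S₂) ∩ A₁ = S₁ := by
    rw [Finset.union_inter_distrib_right, Finset.inter_eq_left.mpr h₁,
      Finset.disjoint_iff_inter_eq_empty.mp (hd.symm.mono_left h₂), Finset.union_empty]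
  have e₂ : (S₁ ∪ S₂) ∩ A₂ = S₂ := by
    rw [Finset.union_inter_distrib_right, Finset.inter_eq_left.mpr h₂,
      Finset.disjoint_iff_inter_eq_empty.mp (hd.mono_left h₁), Finset.empty_union]
  rw [← hQ₁, e₁, ← hQ₂, e₂, weight_union hd h₁ h₂]
  cases Q₁ S₁ <;> cases Q₂ S₂ <;> simp

theorem eval_inter_of_events_subset {t : ADT B} {T : Finset B} (h : t.events ⊆ T) (S : Finset B) :
    t.eval (S ∩ T) = t.eval S := by
  induction t with
  | leaf b => simp_all [events, eval]
  | and t₁ t₂ ih₁ ih₂ | or t₁ t₂ ih₁ ih₂ =>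
    rw [events, Finset.union_subset_iff] at h
    simp only [eval, ih₁ h.1, ih₂ h.2]
  | not t ih => simp only [eval, ih h]

theorem eval_inter_events (t : ADT B) (S : Finset B) : t.eval (S ∩ t.events) = t.eval S :=
  eval_inter_of_events_subset subset_rfl S

theorem Vp_eq_probOf_eval {t : ADT B} (ht : t.Linear) (p : B → ℝ) :
    Vp p t = probOf p t.events (fun S => t.eval S) := by
  induction t with
  | leaf b => exact (probOf_singleton_mem p b).symm
  | and t₁ t₂ ih₁ ih₂ =>
    obtain ⟨ht₁, ht₂, hd⟩ := ht
    rw [Vp, ih₁ ht₁, ih₂ ht₂, ← probOf_and hd (eval_inter_events t₁) (eval_inter_events t₂)]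
    rfl
  | or t₁ t₂ ih₁ ih₂ =>
    obtain ⟨ht₁, ht₂, hd⟩ := ht
    have hor : (fun S => (t₁.or t₂).eval S) = fun S => !((!t₁.eval S) && !t₂.eval S) := by
      simp [eval]
    have hQ (t : ADT B) (S : Finset B) : (!t.eval (S ∩ t.events)) = !t.eval S := by
      rw [eval_inter_events]
    rw [events, hor, probOf_not, probOf_and hd (hQ t₁) (hQ t₂), probOf_not, probOf_not,
      ← ih₁ ht₁, ← ih₂ ht₂, Vp]
    ring
  | not t ih => rw [Vp, ih ht]; exact (probOf_not p _ _).symm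

theorem Vp_eq_one_sub_sum_unsatisfying_general (t : ADT B) (hlin : t.Linear) (p : B → ℝ) :
    Vp p t =
      1 - ∑ S ∈ t.events.powerset.filter (fun S => t.eval S = false),
        (∏ b ∈ S, p b) * ∏ b ∈ t.events \ S, (1 - p b) := by
  have h := probOf_not p t.events (fun S => !t.eval S)
  simp only [Bool.not_not] at h
  rw [Vp_eq_probOf_eval hlin, h, probOf]
  simp only [Bool.not_eq_true']
  rfl

/-- for a linear term, the bottom-up probability equals one minus
the sum, over all unsatisfying assignments `S`, of the probability that exactly
the basic events in `S` succeed. -/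
theorem Vp_eq_one_sub_sum_unsatisfying (t : ADT B) (hlin : t.Linear) (p : B → ℝ)
    (hp : ∀ b, p b ∈ Set.Icc (0 : ℝ) 1) :
    Vp p t =
      1 - ∑ S ∈ t.events.powerset.filter (fun S => t.eval S = false),
        (∏ b ∈ S, p b) * ∏ b ∈ t.events \ S, (1 - p b) :=
  Vp_eq_one_sub_sum_unsatisfying_general t hlin p

end ADT
end

section
/- Let t be an attack–defense tree term over B in which each basic event occurs at most once. For each basic event b let v(b) ∈ [0,1] be an estimate with imprecision bound ε(b) ≥ 0, and let v*(b) ∈ [0,1] be any values with |v*(b) − v(b)| ≤ ε(b) for all b ∈ B(t). Define the propagated error ε(t) recursively by: ε(leaf b) = ε(b); ε(AND t₁ t₂) = V_v(t₁)·ε(t₂) + V_v(t₂)·ε(t₁) + ε(t₁)·ε(t₂); ε(OR t₁ t₂) = ε(t₁) + ε(t₂) + V_v(t₁)·ε(t₂) + V_v(t₂)·ε(t₁) + ε(t₁)·ε(t₂); ε(NOT t') = ε(t'). Then |V_{v*}(t) − V_v(t)| ≤ ε(t). -/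
namespace ADT

variable {B : Type*} [DecidableEq B]

/-- The recursively propagated error bound `ε(t)` for the probabilistic
bottom-up semantics, given leaf estimates `v` and leaf error bounds `ε`. -/
def perr (v ε : B → ℝ) : ADT B → ℝ
  | .leaf b => ε b
  | .and t₁ t₂ =>
      Vp v t₁ * perr v ε t₂ + Vp v t₂ * perr v ε t₁ + perr v ε t₁ * perr v ε t₂
  | .or t₁ t₂ =>
      perr v ε t₁ + perr v ε t₂ +
        Vp v t₁ * perr v ε t₂ + Vp v t₂ * perr v ε t₁ + perr v ε t₁ * perr v ε t₂
  | .not t => perr v ε t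

lemma Vp_mem_Icc (t : ADT B) (v : B → ℝ)
    (hv : ∀ b ∈ t.events, v b ∈ Set.Icc (0 : ℝ) 1) :
    Vp v t ∈ Set.Icc (0 : ℝ) 1 := by
  induction t with
  | leaf b => exact hv b (by simp [events])
  | and t₁ t₂ ih₁ ih₂ =>
    have h₁ := ih₁ (fun b hb => hv b (Finset.mem_union_left _ hb))
    have h₂ := ih₂ (fun b hb => hv b (Finset.mem_union_right _ hb))
    obtain ⟨a, b⟩ := h₁; obtain ⟨c, d⟩ := h₂
    constructor
    · exact mul_nonneg a c
    · calc Vp v t₁ * Vp v t₂ ≤ 1 * 1 := by gcongr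
        _ = 1 := by ring
  | or t₁ t₂ ih₁ ih₂ =>
    have h₁ := ih₁ (fun b hb => hv b (Finset.mem_union_left _ hb))
    have h₂ := ih₂ (fun b hb => hv b (Finset.mem_union_right _ hb))
    obtain ⟨a, b⟩ := h₁; obtain ⟨c, d⟩ := h₂
    constructor
    · simp only [Vp]; nlinarith
    · simp only [Vp]; nlinarith
  | not t ih =>
    have h := ih hv
    obtain ⟨a, b⟩ := h
    constructor
    · simp only [Vp]; linarith
    · simp only [Vp]; linarith

/-- soundness of the PAC-input extension of the bottom-up
probability analysis: the recursively propagated bound dominates the deviation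
of the root value under any perturbation of the leaf values within their
imprecision bounds. -/
theorem abs_Vp_sub_le_perr (t : ADT B) (hlin : t.Linear) (v vs ε : B → ℝ)
    (hv : ∀ b ∈ t.events, v b ∈ Set.Icc (0 : ℝ) 1)
    (hvs : ∀ b ∈ t.events, vs b ∈ Set.Icc (0 : ℝ) 1)
    (hε : ∀ b ∈ t.events, 0 ≤ ε b)
    (hclose : ∀ b ∈ t.events, |vs b - v b| ≤ ε b) :
    |Vp vs t - Vp v t| ≤ perr v ε t := by
  clear hlin
  induction t with
  | leaf b => exact hclose b (by simp [events])
  | and t₁ t₂ ih₁ ih₂ =>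
    have h1 := ih₁ (fun b hb => hv b (Finset.mem_union_left _ hb))
      (fun b hb => hvs b (Finset.mem_union_left _ hb))
      (fun b hb => hε b (Finset.mem_union_left _ hb))
      (fun b hb => hclose b (Finset.mem_union_left _ hb))
    have h2 := ih₂ (fun b hb => hv b (Finset.mem_union_right _ hb))
      (fun b hb => hvs b (Finset.mem_union_right _ hb))
      (fun b hb => hε b (Finset.mem_union_right _ hb))
      (fun b hb => hclose b (Finset.mem_union_right _ hb))
    have b1 := Vp_mem_Icc t₁ v (fun b hb => hv b (Finset.mem_union_left _ hb))
    have b2 := Vp_mem_Icc t₂ v (fun b hb => hv b (Finset.mem_union_right _ hb))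
    have bs1 := Vp_mem_Icc t₁ vs (fun b hb => hvs b (Finset.mem_union_left _ hb))
    have key : |Vp vs t₁ * Vp vs t₂ - Vp v t₁ * Vp v t₂| ≤
        Vp v t₁ * perr v ε t₂ + Vp v t₂ * perr v ε t₁ + perr v ε t₁ * perr v ε t₂ := by
      have e : Vp vs t₁ * Vp vs t₂ - Vp v t₁ * Vp v t₂ =
          Vp vs t₁ * (Vp vs t₂ - Vp v t₂) + Vp v t₂ * (Vp vs t₁ - Vp v t₁) := by ring
      rw [e]
      calc |Vp vs t₁ * (Vp vs t₂ - Vp v t₂) + Vp v t₂ * (Vp vs t₁ - Vp v t₁)|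
          ≤ |Vp vs t₁ * (Vp vs t₂ - Vp v t₂)| + |Vp v t₂ * (Vp vs t₁ - Vp v t₁)| :=
            abs_add_le _ _
        _ = |Vp vs t₁| * |Vp vs t₂ - Vp v t₂| + |Vp v t₂| * |Vp vs t₁ - Vp v t₁| := by
            rw [abs_mul, abs_mul]
        _ ≤ (Vp v t₁ + perr v ε t₁) * perr v ε t₂ + Vp v t₂ * perr v ε t₁ := by
            have A1 : |Vp vs t₁| ≤ Vp v t₁ + perr v ε t₁ := by
              rw [abs_of_nonneg bs1.1]
              have := (abs_le.mp h1).2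
              linarith
            have m1 : |Vp vs t₁| * |Vp vs t₂ - Vp v t₂| ≤
                (Vp v t₁ + perr v ε t₁) * perr v ε t₂ :=
              mul_le_mul A1 h2 (abs_nonneg _) (le_trans (abs_nonneg _) A1)
            have m2 : |Vp v t₂| * |Vp vs t₁ - Vp v t₁| ≤ Vp v t₂ * perr v ε t₁ := by
              rw [abs_of_nonneg b2.1]
              exact mul_le_mul_of_nonneg_left h1 b2.1
            linarith
        _ = Vp v t₁ * perr v ε t₂ + Vp v t₂ * perr v ε t₁ + perr v ε t₁ * perr v ε t₂ := by
            ring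
    simpa [Vp, perr] using key
  | or t₁ t₂ ih₁ ih₂ =>
    have h1 := ih₁ (fun b hb => hv b (Finset.mem_union_left _ hb))
      (fun b hb => hvs b (Finset.mem_union_left _ hb))
      (fun b hb => hε b (Finset.mem_union_left _ hb))
      (fun b hb => hclose b (Finset.mem_union_left _ hb))
    have h2 := ih₂ (fun b hb => hv b (Finset.mem_union_right _ hb))
      (fun b hb => hvs b (Finset.mem_union_right _ hb))
      (fun b hb => hε b (Finset.mem_union_right _ hb))
      (fun b hb => hclose b (Finset.mem_union_right _ hb))
    have b2 := Vp_mem_Icc t₂ v (fun b hb => hv b (Finset.mem_union_right _ hb))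
    have bs1 := Vp_mem_Icc t₁ vs (fun b hb => hvs b (Finset.mem_union_left _ hb))
    have b1 := Vp_mem_Icc t₁ v (fun b hb => hv b (Finset.mem_union_left _ hb))
    have key : |Vp vs t₁ * Vp vs t₂ - Vp v t₁ * Vp v t₂| ≤
        Vp v t₁ * perr v ε t₂ + Vp v t₂ * perr v ε t₁ + perr v ε t₁ * perr v ε t₂ := by
      have e : Vp vs t₁ * Vp vs t₂ - Vp v t₁ * Vp v t₂ =
          Vp vs t₁ * (Vp vs t₂ - Vp v t₂) + Vp v t₂ * (Vp vs t₁ - Vp v t₁) := by ring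
      rw [e]
      calc |Vp vs t₁ * (Vp vs t₂ - Vp v t₂) + Vp v t₂ * (Vp vs t₁ - Vp v t₁)|
          ≤ |Vp vs t₁| * |Vp vs t₂ - Vp v t₂| + |Vp v t₂| * |Vp vs t₁ - Vp v t₁| := by
            rw [← abs_mul, ← abs_mul]; exact abs_add_le _ _
        _ ≤ (Vp v t₁ + perr v ε t₁) * perr v ε t₂ + Vp v t₂ * perr v ε t₁ := by
            have A1 : |Vp vs t₁| ≤ Vp v t₁ + perr v ε t₁ := by
              rw [abs_of_nonneg bs1.1]
              have := (abs_le.mp h1).2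
              linarith
            have m1 : |Vp vs t₁| * |Vp vs t₂ - Vp v t₂| ≤
                (Vp v t₁ + perr v ε t₁) * perr v ε t₂ :=
              mul_le_mul A1 h2 (abs_nonneg _) (le_trans (abs_nonneg _) A1)
            have m2 : |Vp v t₂| * |Vp vs t₁ - Vp v t₁| ≤ Vp v t₂ * perr v ε t₁ := by
              rw [abs_of_nonneg b2.1]
              exact mul_le_mul_of_nonneg_left h1 b2.1
            linarith
        _ = Vp v t₁ * perr v ε t₂ + Vp v t₂ * perr v ε t₁ + perr v ε t₁ * perr v ε t₂ := by
            ring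
    have habs := abs_sub_abs_le_abs_sub (Vp vs t₁) (Vp v t₁)
    have : |(Vp vs t₁ + Vp vs t₂ - Vp vs t₁ * Vp vs t₂) -
        (Vp v t₁ + Vp v t₂ - Vp v t₁ * Vp v t₂)| ≤
        |Vp vs t₁ - Vp v t₁| + |Vp vs t₂ - Vp v t₂| +
          |Vp vs t₁ * Vp vs t₂ - Vp v t₁ * Vp v t₂| := by
      have e : (Vp vs t₁ + Vp vs t₂ - Vp vs t₁ * Vp vs t₂) -
          (Vp v t₁ + Vp v t₂ - Vp v t₁ * Vp v t₂) =
          (Vp vs t₁ - Vp v t₁) + (Vp vs t₂ - Vp v t₂) -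
            (Vp vs t₁ * Vp vs t₂ - Vp v t₁ * Vp v t₂) := by ring
      rw [e]
      calc _ ≤ |(Vp vs t₁ - Vp v t₁) + (Vp vs t₂ - Vp v t₂)| +
            |Vp vs t₁ * Vp vs t₂ - Vp v t₁ * Vp v t₂| := abs_sub _ _
        _ ≤ _ := by gcongr; exact abs_add_le _ _
    simp only [Vp, perr]
    linarith
  | not t ih =>
    have h := ih hv hvs hε hclose
    simp only [Vp, perr]
    rw [show (1 - Vp vs t) - (1 - Vp v t) = -(Vp vs t - Vp v t) by ring, abs_neg]
    exact h

end ADT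
end

section
/- Let t be an attack–defense tree term over B in which each basic event occurs at most once. For each basic event b let c(b) ≥ 0 be a cost estimate with imprecision bound ε(b) ≥ 0, and let c*(b) ≥ 0 be any values with |c*(b) − c(b)| ≤ ε(b) for all b ∈ B(t). Define the propagated error pair E(t) = (ε₁(t), ε₂(t)) recursively by: E(leaf b) = (ε(b), 0); if E(t₁) = (a₁, a₂) and E(t₂) = (b₁, b₂), then E(AND t₁ t₂) = (a₁ + b₁, max(a₂, b₂)) and E(OR t₁ t₂) = (max(a₁, b₁), a₂ + b₂); and E(NOT t') = (a₂, a₁) where E(t') = (a₁, a₂). Then for the minimal-cost bottom-up semantics, writing V_c(t) = (s, f) and V_{c*}(t) = (s*, f*), it holds that |s* − s| ≤ ε₁(t) and |f* − f| ≤ ε₂(t). -/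
namespace ADT

variable {B : Type*} [DecidableEq B]

/-- The minimal-cost bottom-up traversal semantics `V_c(t)`: the first component
is the minimal cost of succeeding, the second the minimal cost of failing. -/
def Vc (c : B → ℝ) : ADT B → ℝ × ℝ
  | .leaf b => (c b, 0)
  | .and t₁ t₂ => ((Vc c t₁).1 + (Vc c t₂).1, min (Vc c t₁).2 (Vc c t₂).2)
  | .or t₁ t₂ => (min (Vc c t₁).1 (Vc c t₂).1, (Vc c t₁).2 + (Vc c t₂).2)
  | .not t => ((Vc c t).2, (Vc c t).1)

/-- The recursively propagated error pair `E(t) = (ε₁(t), ε₂(t))` for the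
minimal-cost bottom-up semantics, given leaf error bounds `ε`:
addition propagates `ε₁ + ε₂` and `min` propagates `max ε₁ ε₂`. -/
def cerr (ε : B → ℝ) : ADT B → ℝ × ℝ
  | .leaf b => (ε b, 0)
  | .and t₁ t₂ => ((cerr ε t₁).1 + (cerr ε t₂).1, max (cerr ε t₁).2 (cerr ε t₂).2)
  | .or t₁ t₂ => (max (cerr ε t₁).1 (cerr ε t₂).1, (cerr ε t₁).2 + (cerr ε t₂).2)
  | .not t => ((cerr ε t).2, (cerr ε t).1)

/-- soundness of the PAC-input extension of the bottom-up
minimal-cost analysis: the recursively propagated error pair bounds the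
deviation of both components of the root value under any perturbation of the
leaf costs within their imprecision bounds. -/
theorem abs_Vc_sub_le_cerr (t : ADT B) (hlin : t.Linear) (c cs ε : B → ℝ)
    (hc : ∀ b ∈ t.events, 0 ≤ c b)
    (hcs : ∀ b ∈ t.events, 0 ≤ cs b)
    (hε : ∀ b ∈ t.events, 0 ≤ ε b)
    (hclose : ∀ b ∈ t.events, |cs b - c b| ≤ ε b) :
    |(Vc cs t).1 - (Vc c t).1| ≤ (cerr ε t).1 ∧
      |(Vc cs t).2 - (Vc c t).2| ≤ (cerr ε t).2 := by
  induction t with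
  | leaf b =>
      refine ⟨?_, by simp [Vc, cerr]⟩
      simpa [Vc, cerr] using hclose b (by simp [events])
  | and t₁ t₂ ih₁ ih₂ =>
      have h₁ := ih₁ hlin.1 (fun b hb => hc b (by simp [events, hb]))
        (fun b hb => hcs b (by simp [events, hb])) (fun b hb => hε b (by simp [events, hb]))
        (fun b hb => hclose b (by simp [events, hb]))
      have h₂ := ih₂ hlin.2.1 (fun b hb => hc b (by simp [events, hb]))
        (fun b hb => hcs b (by simp [events, hb])) (fun b hb => hε b (by simp [events, hb]))
        (fun b hb => hclose b (by simp [events, hb]))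
      constructor
      · calc |(Vc cs t₁).1 + (Vc cs t₂).1 - ((Vc c t₁).1 + (Vc c t₂).1)|
            = |((Vc cs t₁).1 - (Vc c t₁).1) + ((Vc cs t₂).1 - (Vc c t₂).1)| := by ring_nf
          _ ≤ _ := (abs_add_le _ _).trans (add_le_add h₁.1 h₂.1)
      · exact (abs_min_sub_min_le_max _ _ _ _).trans (max_le_max h₁.2 h₂.2)
  | or t₁ t₂ ih₁ ih₂ =>
      have h₁ := ih₁ hlin.1 (fun b hb => hc b (by simp [events, hb]))
        (fun b hb => hcs b (by simp [events, hb])) (fun b hb => hε b (by simp [events, hb]))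
        (fun b hb => hclose b (by simp [events, hb]))
      have h₂ := ih₂ hlin.2.1 (fun b hb => hc b (by simp [events, hb]))
        (fun b hb => hcs b (by simp [events, hb])) (fun b hb => hε b (by simp [events, hb]))
        (fun b hb => hclose b (by simp [events, hb]))
      constructor
      · exact (abs_min_sub_min_le_max _ _ _ _).trans (max_le_max h₁.1 h₂.1)
      · calc |(Vc cs t₁).2 + (Vc cs t₂).2 - ((Vc c t₁).2 + (Vc c t₂).2)|
            = |((Vc cs t₁).2 - (Vc c t₁).2) + ((Vc cs t₂).2 - (Vc c t₂).2)| := by ring_nf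
          _ ≤ _ := (abs_add_le _ _).trans (add_le_add h₁.2 h₂.2)
  | not t ih =>
      have h := ih hlin hc hcs hε hclose
      exact ⟨h.2, h.1⟩

end ADT
end
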